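/- arXiv:2504.03348 — 4 statements merged into one kernel-verified Lean document; each statement's English description precedes it below -/
import Mathlib

section
/- If f : [0,1] → ℝ is twice continuously differentiable, then for every ν ≥ 1 and every x ∈ [0,1], |B_ν(f)(x) − f(x)| ≤ (1/(2ν)) x(1−x) ‖f''‖_{[0,1]}, where ‖·‖_{[0,1]} denotes the supremum norm on [0,1]. -/
/-!
Taylor's theorem with the Lagrange remainder bounds the first-order remainder of `f` at `x` by
`M / 2 * (y - x) ^ 2` on all of `[0, 1]`. Bernstein operators reproduce affine functions, so
`B_ν f x - f x` is the Bernstein average of this remainder over the nodes `k / ν`, and the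
Bernstein average of `(k / ν - x) ^ 2` is the binomial variance `x (1 - x) / ν`.
-/

/-- Bernstein basis polynomial `B_{k,ν}(x) = C(ν,k) x^k (1-x)^(ν-k)`. -/
noncomputable def bern (ν k : ℕ) (x : ℝ) : ℝ :=
  (ν.choose k : ℝ) * x ^ k * (1 - x) ^ (ν - k)

/-- Bernstein polynomial of degree `ν` of `f`. -/
noncomputable def bernApprox (f : ℝ → ℝ) (ν : ℕ) (x : ℝ) : ℝ :=
  ∑ k ∈ Finset.range (ν + 1), f ((k : ℝ) / ν) * bern ν k x

open Set Polynomial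

theorem abs_sub_sub_derivWithin_mul_le {f : ℝ → ℝ} {a b M x y : ℝ}
    (hf : ContDiffOn ℝ 2 f (Icc a b))
    (hM : ∀ t ∈ Icc a b, |iteratedDerivWithin 2 f (Icc a b) t| ≤ M)
    (hx : x ∈ Icc a b) (hy : y ∈ Icc a b) :
    |f y - f x - derivWithin f (Icc a b) x * (y - x)| ≤ M / 2 * (y - x) ^ 2 := by
  rcases eq_or_ne x y with rfl | hxy
  · simp
  have hsub : uIcc x y ⊆ Icc a b := uIcc_subset_Icc hx hy
  -- The Lagrange form keeps the `1 / 2!`; `taylor_mean_remainder_bound` would lose a factor 2.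
  obtain ⟨ξ, hξ, htaylor⟩ :=
    taylor_mean_remainder_lagrange_iteratedDeriv (n := 1) hxy (hf.mono hsub)
  have hderiv : derivWithin f (uIcc x y) x = derivWithin f (Icc a b) x :=
    ((hf.differentiableOn two_ne_zero x hx).hasDerivWithinAt.mono hsub).derivWithin
      (uniqueDiffOn_uIcc hxy x left_mem_uIcc)
  have hξ_mem : ξ ∈ Ioo a b := by
    simp only [uIoo, Set.mem_Ioo] at hξ
    exact ⟨(le_min hx.1 hy.1).trans_lt hξ.1, hξ.2.trans_le (max_le hx.2 hy.2)⟩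
  have hsecond : iteratedDeriv 2 f ξ = iteratedDerivWithin 2 f (Icc a b) ξ :=
    (iteratedDerivWithin_eq_iteratedDeriv (uniqueDiffOn_Icc (hξ_mem.1.trans hξ_mem.2))
      (hf.contDiffAt (Icc_mem_nhds hξ_mem.1 hξ_mem.2)) (Ioo_subset_Icc_self hξ_mem)).symm
  norm_num [taylorWithinEval_succ, hderiv] at htaylor
  have hremainder : f y - f x - derivWithin f (Icc a b) x * (y - x) =
      iteratedDerivWithin 2 f (Icc a b) ξ / 2 * (y - x) ^ 2 := by
    rw [← hsecond]
    linarith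
  rw [hremainder, abs_mul, abs_div, abs_two, abs_sq]
  gcongr
  exact hM ξ (Ioo_subset_Icc_self hξ_mem)

namespace bern

theorem eq_eval (ν k : ℕ) (x : ℝ) : bern ν k x = (bernsteinPolynomial ℝ ν k).eval x := by
  simp [bern, bernsteinPolynomial]

theorem nonneg (ν k : ℕ) {x : ℝ} (hx : x ∈ Icc 0 1) : 0 ≤ bern ν k x :=
  mul_nonneg (mul_nonneg (Nat.cast_nonneg _) (pow_nonneg hx.1 _)) (pow_nonneg (sub_nonneg.2 hx.2) _)

theorem sum (ν : ℕ) (x : ℝ) : ∑ k ∈ Finset.range (ν + 1), bern ν k x = 1 := by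
  simpa [eq_eval, eval_finsetSum] using congr_arg (eval x) (bernsteinPolynomial.sum ℝ ν)

theorem sum_natCast_mul (ν : ℕ) (x : ℝ) :
    ∑ k ∈ Finset.range (ν + 1), (k : ℝ) * bern ν k x = ν * x := by
  simpa [eq_eval, eval_finsetSum] using congr_arg (eval x) (bernsteinPolynomial.sum_smul ℝ ν)

theorem sum_sq_mul (ν : ℕ) (x : ℝ) :
    ∑ k ∈ Finset.range (ν + 1), (ν * x - k) ^ 2 * bern ν k x = ν * x * (1 - x) := by
  simpa [eq_eval, eval_finsetSum] using congr_arg (eval x) (bernsteinPolynomial.variance ℝ ν)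

theorem sum_sub_mul {ν : ℕ} (hν : ν ≠ 0) (x : ℝ) :
    ∑ k ∈ Finset.range (ν + 1), ((k : ℝ) / ν - x) * bern ν k x = 0 := by
  have hν' : (ν : ℝ) ≠ 0 := Nat.cast_ne_zero.2 hν
  simp only [sub_mul, Finset.sum_sub_distrib, div_mul_eq_mul_div, ← Finset.sum_div,
    ← Finset.mul_sum, sum_natCast_mul, sum]
  field_simp
  ring

theorem sum_sub_sq_mul {ν : ℕ} (hν : ν ≠ 0) (x : ℝ) :
    ∑ k ∈ Finset.range (ν + 1), ((k : ℝ) / ν - x) ^ 2 * bern ν k x = x * (1 - x) / ν := by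
  have hν' : (ν : ℝ) ≠ 0 := Nat.cast_ne_zero.2 hν
  have hsq (k : ℕ) : ((k : ℝ) / ν - x) ^ 2 = (ν * x - k) ^ 2 / ν ^ 2 := by
    field_simp
    ring
  simp only [hsq, div_mul_eq_mul_div, ← Finset.sum_div, sum_sq_mul]
  field_simp

end bern

theorem natCast_div_mem_Icc {ν k : ℕ} (hk : k ∈ Finset.range (ν + 1)) :
    (k : ℝ) / ν ∈ Icc 0 1 := by
  have hk' : (k : ℝ) ≤ ν := by exact_mod_cast Finset.mem_range_succ_iff.1 hk
  exact ⟨by positivity, div_le_one_of_le₀ hk' (Nat.cast_nonneg ν)⟩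

theorem bernApprox_sub_eq_sum {ν : ℕ} (hν : ν ≠ 0) (f : ℝ → ℝ) (x c : ℝ) :
    bernApprox f ν x - f x =
      ∑ k ∈ Finset.range (ν + 1), (f (k / ν) - f x - c * (k / ν - x)) * bern ν k x := by
  simp only [sub_mul (f _ - f x), sub_mul (f _) (f x), Finset.sum_sub_distrib, ← Finset.mul_sum,
    mul_assoc c, bern.sum, bern.sum_sub_mul hν, bernApprox]
  ring

theorem abs_bernApprox_sub_le {ν : ℕ} (hν : ν ≠ 0) {f : ℝ → ℝ} {x c K : ℝ} (hx : x ∈ Icc 0 1)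
    (hf : ∀ y ∈ Icc 0 1, |f y - f x - c * (y - x)| ≤ K * (y - x) ^ 2) :
    |bernApprox f ν x - f x| ≤ K * (x * (1 - x) / ν) := by
  rw [bernApprox_sub_eq_sum hν f x c, ← bern.sum_sub_sq_mul hν x, Finset.mul_sum]
  refine (Finset.abs_sum_le_sum_abs _ _).trans (Finset.sum_le_sum fun k hk => ?_)
  rw [abs_mul, abs_of_nonneg (bern.nonneg ν k hx), ← mul_assoc]
  exact mul_le_mul_of_nonneg_right (hf _ (natCast_div_mem_Icc hk)) (bern.nonneg ν k hx)

theorem bernstein_error_bound (f : ℝ → ℝ)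
    (hf : ContDiffOn ℝ 2 f (Set.Icc (0 : ℝ) 1)) (M : ℝ)
    (hM : ∀ t ∈ Set.Icc (0 : ℝ) 1,
      |iteratedDerivWithin 2 f (Set.Icc (0 : ℝ) 1) t| ≤ M)
    (ν : ℕ) (hν : 1 ≤ ν) (x : ℝ) (hx : x ∈ Set.Icc (0 : ℝ) 1) :
    |bernApprox f ν x - f x| ≤ 1 / (2 * ν) * (x * (1 - x)) * M := by
  calc |bernApprox f ν x - f x| ≤ M / 2 * (x * (1 - x) / ν) :=
        abs_bernApprox_sub_le (Nat.one_le_iff_ne_zero.1 hν) hx fun _ hy =>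
          abs_sub_sub_derivWithin_mul_le hf hM hx hy
    _ = 1 / (2 * ν) * (x * (1 - x)) * M := by ring
end

section
/- Let f₁, f₂ : [0,1] → ℝ be continuous functions that coincide on an open set Ω ⊂ (0,1), let ℓ ≥ 0 be an integer and let K ⊂ Ω be compact. Then there exists a constant M > 0, depending only on K and ℓ, such that for all ν ≥ 1 and all x ∈ K, |B_ν(f₁)^{(ℓ)}(x) − B_ν(f₂)^{(ℓ)}(x)| ≤ (M/ν²)·‖f₁ − f₂‖_{[0,1]}. -/
open Finset Polynomial Real fwdDiff
open scoped Nat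

section Polynomial

variable {R : Type*} [CommRing R]

noncomputable def bernsteinSum (n : ℕ) (c : ℕ → R) : R[X] :=
  ∑ j ∈ range (n + 1), c j • bernsteinPolynomial R n j

theorem derivative_bernsteinSum (n : ℕ) (c : ℕ → R) :
    derivative (bernsteinSum n c) = (n : R[X]) * bernsteinSum (n - 1) (Δ_[1] c) := by
  cases n with
  | zero => simp [bernsteinSum, bernsteinPolynomial]
  | succ m =>
    have hshift : ∑ j ∈ range (m + 1), c (j + 1) • bernsteinPolynomial R m (j + 1) +
        c 0 • bernsteinPolynomial R m 0 = ∑ j ∈ range (m + 1), c j • bernsteinPolynomial R m j := by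
      rw [← sum_range_succ' (fun j ↦ c j • bernsteinPolynomial R m j), sum_range_succ,
        bernsteinPolynomial.eq_zero_of_lt R (Nat.lt_succ_self m), smul_zero, add_zero]
    simp only [bernsteinSum, derivative_sum, derivative_smul, Nat.add_sub_cancel, fwdDiff,
      sub_smul, sum_sub_distrib]
    rw [sum_range_succ', ← hshift]
    simp only [bernsteinPolynomial.derivative_succ_aux, bernsteinPolynomial.derivative_zero,
      Nat.add_sub_cancel, ← mul_smul_comm, smul_sub, smul_neg, neg_mul, sum_sub_distrib, ← mul_sum]
    push_cast
    ring

theorem iterate_derivative_bernsteinSum (ℓ n : ℕ) (c : ℕ → R) :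
    derivative^[ℓ] (bernsteinSum n c) =
      (n.descFactorial ℓ : R[X]) * bernsteinSum (n - ℓ) ((Δ_[1])^[ℓ] c) := by
  induction ℓ with
  | zero => simp
  | succ ℓ ih =>
    rw [Function.iterate_succ_apply', ih, derivative_mul, derivative_natCast, zero_mul, zero_add,
      derivative_bernsteinSum, Nat.descFactorial_succ, Function.iterate_succ_apply',
      Nat.sub_sub]
    push_cast
    ring

theorem bernsteinSum_sub (n : ℕ) (c₁ c₂ : ℕ → R) :
    bernsteinSum n (c₁ - c₂) = bernsteinSum n c₁ - bernsteinSum n c₂ := by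
  simp only [bernsteinSum, Pi.sub_apply, sub_smul, sum_sub_distrib]

end Polynomial

theorem iteratedDeriv_eval {𝕜 : Type*} [NontriviallyNormedField 𝕜] (p : 𝕜[X]) (ℓ : ℕ) :
    iteratedDeriv ℓ (fun x ↦ p.eval x) = fun x ↦ (derivative^[ℓ] p).eval x := by
  induction ℓ with
  | zero => simp
  | succ ℓ ih =>
    ext x
    rw [iteratedDeriv_succ, ih, Function.iterate_succ_apply', Polynomial.deriv]

theorem eval_bernsteinPolynomial (n k : ℕ) (x : ℝ) :
    (bernsteinPolynomial ℝ n k).eval x = bern n k x := by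
  simp [bernsteinPolynomial, bern]

theorem eval_bernsteinSum (n : ℕ) (c : ℕ → ℝ) (x : ℝ) :
    (bernsteinSum n c).eval x = ∑ j ∈ range (n + 1), c j * bern n j x := by
  simp [bernsteinSum, eval_finsetSum, eval_bernsteinPolynomial]

theorem bernApprox_eq_eval (f : ℝ → ℝ) (ν : ℕ) :
    bernApprox f ν = fun x ↦ (bernsteinSum ν fun k ↦ f (k / ν)).eval x := by
  ext x
  rw [eval_bernsteinSum, bernApprox]

theorem iteratedDeriv_bernApprox (f : ℝ → ℝ) (ν ℓ : ℕ) (x : ℝ) :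
    iteratedDeriv ℓ (bernApprox f ν) x = ν.descFactorial ℓ *
      ∑ j ∈ range (ν - ℓ + 1), (Δ_[1])^[ℓ] (fun k : ℕ ↦ f (k / ν)) j * bern (ν - ℓ) j x := by
  rw [bernApprox_eq_eval, iteratedDeriv_eval, iterate_derivative_bernsteinSum]
  simp only [eval_mul, eval_natCast, eval_bernsteinSum]

theorem iteratedDeriv_bernApprox_sub (f₁ f₂ : ℝ → ℝ) (ν ℓ : ℕ) (x : ℝ) :
    iteratedDeriv ℓ (bernApprox f₁ ν) x - iteratedDeriv ℓ (bernApprox f₂ ν) x =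
      iteratedDeriv ℓ (bernApprox (f₁ - f₂) ν) x := by
  simp only [bernApprox_eq_eval, iteratedDeriv_eval, ← eval_sub, ← iterate_derivative_sub,
    ← bernsteinSum_sub]
  rfl

theorem bern_nonneg {n k : ℕ} {x : ℝ} (hx : x ∈ Set.Icc (0 : ℝ) 1) : 0 ≤ bern n k x := by
  have : 0 ≤ 1 - x := sub_nonneg.2 hx.2
  have := hx.1
  unfold bern
  positivity

theorem sum_bern (n : ℕ) (x : ℝ) : ∑ k ∈ range (n + 1), bern n k x = 1 := by
  simpa [eval_finsetSum, eval_bernsteinPolynomial] using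
    congr_arg (eval x) (bernsteinPolynomial.sum ℝ n)

theorem norm_fwdDiff_iter_le {E : Type*} [SeminormedAddCommGroup E] {a : ℕ → E} {N : ℝ}
    {ℓ j : ℕ} (h : ∀ i ≤ ℓ, ‖a (j + i)‖ ≤ N) : ‖(Δ_[1])^[ℓ] a j‖ ≤ 2 ^ ℓ * N := by
  rw [fwdDiff_iter_eq_sum_shift]
  calc ‖∑ i ∈ range (ℓ + 1), ((-1 : ℤ) ^ (ℓ - i) * ℓ.choose i) • a (j + i • 1)‖
      ≤ ∑ i ∈ range (ℓ + 1), ℓ.choose i * N := by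
        refine norm_sum_le_of_le _ fun i hi ↦ ?_
        refine (norm_zsmul_le _ _).trans ?_
        rw [smul_eq_mul, mul_one]
        simpa using mul_le_mul_of_nonneg_left (h i (Nat.lt_succ_iff.1 (mem_range.1 hi)))
          (Nat.cast_nonneg (ℓ.choose i))
    _ = 2 ^ ℓ * N := by
        rw [← sum_mul, ← Nat.cast_sum, Nat.sum_range_choose, Nat.cast_pow, Nat.cast_ofNat]

theorem abs_sum_mul_bern_le {m : ℕ} {c : ℕ → ℝ} {x A : ℝ} (hx : x ∈ Set.Icc (0 : ℝ) 1)
    (P : ℕ → Prop) [DecidablePred P] (hc : ∀ j ≤ m, |c j| ≤ A) (hP : ∀ j ≤ m, ¬ P j → c j = 0) :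
    |∑ j ∈ range (m + 1), c j * bern m j x| ≤ A * ∑ j ∈ (range (m + 1)).filter P, bern m j x := by
  rw [sum_filter, mul_sum]
  refine (abs_sum_le_sum_abs _ _).trans (sum_le_sum fun j hj ↦ ?_)
  have hj : j ≤ m := Nat.lt_succ_iff.1 (mem_range.1 hj)
  rw [abs_mul, abs_of_nonneg (bern_nonneg hx)]
  split_ifs with hPj
  · exact mul_le_mul_of_nonneg_right (hc j hj) (bern_nonneg hx)
  · simp [hP j hj hPj]

theorem sum_exp_mul_bern (m : ℕ) (x t : ℝ) :
    ∑ j ∈ range (m + 1), exp (t * (j - m * x)) * bern m j x =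
      (x * exp (t * (1 - x)) + (1 - x) * exp (-(t * x))) ^ m := by
  rw [add_pow]
  refine sum_congr rfl fun j hj ↦ ?_
  have hexp : exp (t * (j - m * x)) = exp (t * (1 - x)) ^ j * exp (-(t * x)) ^ (m - j) := by
    rw [← exp_nat_mul, ← exp_nat_mul, ← exp_add, Nat.cast_sub (Nat.lt_succ_iff.1 (mem_range.1 hj))]
    ring_nf
  rw [hexp, bern, mul_pow, mul_pow]
  ring

theorem bernoulli_mgf_le {x t : ℝ} (hx : x ∈ Set.Icc (0 : ℝ) 1) (ht : |t| ≤ 1) :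
    x * exp (t * (1 - x)) + (1 - x) * exp (-(t * x)) ≤ exp (t ^ 2 / 4) := by
  obtain ⟨hx0, hx1⟩ := hx
  have hu := abs_le.1 (abs_exp_sub_one_sub_id_le (x := t * (1 - x)) (by
    rw [abs_mul, abs_of_nonneg (sub_nonneg.2 hx1)]; nlinarith [abs_nonneg t]))
  have hv := abs_le.1 (abs_exp_sub_one_sub_id_le (x := -(t * x)) (by
    rw [abs_neg, abs_mul, abs_of_nonneg hx0]; nlinarith [abs_nonneg t]))
  have := add_one_le_exp (t ^ 2 / 4)
  nlinarith [mul_le_mul_of_nonneg_left hu.2 hx0, mul_le_mul_of_nonneg_left hv.2 (sub_nonneg.2 hx1),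
    sq_nonneg (t * (2 * x - 1))]

theorem sum_exp_mul_bern_le (m : ℕ) {x t : ℝ} (hx : x ∈ Set.Icc (0 : ℝ) 1) (ht : |t| ≤ 1) :
    ∑ j ∈ range (m + 1), exp (t * (j - m * x)) * bern m j x ≤ exp (m * (t ^ 2 / 4)) := by
  rw [sum_exp_mul_bern, exp_nat_mul]
  refine pow_le_pow_left₀ ?_ (bernoulli_mgf_le hx ht) m
  have := hx.1
  have : 0 ≤ 1 - x := sub_nonneg.2 hx.2
  positivity

theorem sum_bern_far_le (m : ℕ) {x η : ℝ} (hx : x ∈ Set.Icc (0 : ℝ) 1) (hη0 : 0 ≤ η)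
    (hη1 : η ≤ 1) :
    ∑ j ∈ (range (m + 1)).filter fun j : ℕ ↦ η * m ≤ |(j : ℝ) - m * x|, bern m j x ≤
      2 * exp (-(3 / 4 * η ^ 2 * m)) := by
  set E : ℝ → ℕ → ℝ := fun t j ↦ exp (t * (j - m * x)) * bern m j x
  have hfar : ∀ j : ℕ, η * m ≤ |j - m * x| →
      bern m j x ≤ exp (-(η ^ 2 * m)) * (E η j + E (-η) j) := by
    intro j hj
    have hone : 1 ≤ exp (-(η ^ 2 * m)) * (exp (η * (j - m * x)) + exp (-η * (j - m * x))) := by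
      rw [mul_add, ← exp_add, ← exp_add]
      rcases le_abs'.1 hj with h | h
      · exact one_le_exp (by nlinarith [mul_le_mul_of_nonneg_left h hη0]) |>.trans
          (le_add_of_nonneg_left (exp_nonneg _))
      · exact one_le_exp (by nlinarith [mul_le_mul_of_nonneg_left h hη0]) |>.trans
          (le_add_of_nonneg_right (exp_nonneg _))
    calc bern m j x ≤ 1 * bern m j x := by rw [one_mul]
      _ ≤ _ := mul_le_mul_of_nonneg_right hone (bern_nonneg hx)
      _ = exp (-(η ^ 2 * m)) * (E η j + E (-η) j) := by simp only [E]; ring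
  calc ∑ j ∈ (range (m + 1)).filter fun j : ℕ ↦ η * m ≤ |(j : ℝ) - m * x|, bern m j x
      ≤ ∑ j ∈ (range (m + 1)).filter fun j : ℕ ↦ η * m ≤ |(j : ℝ) - m * x|,
          exp (-(η ^ 2 * m)) * (E η j + E (-η) j) :=
        sum_le_sum fun j hj ↦ hfar j (mem_filter.1 hj).2
    _ ≤ ∑ j ∈ range (m + 1), exp (-(η ^ 2 * m)) * (E η j + E (-η) j) :=
        sum_le_sum_of_subset_of_nonneg (filter_subset _ _) fun j _ _ ↦ by
          have := bern_nonneg (n := m) (k := j) hx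
          positivity
    _ = exp (-(η ^ 2 * m)) * (∑ j ∈ range (m + 1), E η j + ∑ j ∈ range (m + 1), E (-η) j) := by
        rw [← mul_sum, sum_add_distrib]
    _ ≤ exp (-(η ^ 2 * m)) * (exp (m * (η ^ 2 / 4)) + exp (m * ((-η) ^ 2 / 4))) := by
        gcongr
        · exact sum_exp_mul_bern_le m hx (by rwa [abs_of_nonneg hη0])
        · exact sum_exp_mul_bern_le m hx (by rwa [abs_neg, abs_of_nonneg hη0])
    _ = 2 * exp (-(3 / 4 * η ^ 2 * m)) := by
        rw [neg_sq, mul_add, ← exp_add, ← two_mul]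
        ring_nf

theorem pow_mul_exp_neg_le (n : ℕ) {c t : ℝ} (hc : 0 < c) (ht : 0 ≤ t) :
    t ^ n * exp (-(c * t)) ≤ n ! / c ^ n := by
  have h := pow_div_factorial_le_exp (c * t) (mul_nonneg hc.le ht) n
  rw [div_le_iff₀ (by positivity), mul_pow] at h
  rw [le_div_iff₀ (by positivity)]
  calc t ^ n * exp (-(c * t)) * c ^ n = c ^ n * t ^ n * exp (-(c * t)) := by ring
    _ ≤ exp (c * t) * n ! * exp (-(c * t)) := by gcongr
    _ = n ! := by rw [mul_right_comm, ← exp_add, add_neg_cancel, exp_zero, one_mul]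

theorem abs_iteratedDeriv_bernApprox_le {g : ℝ → ℝ} {N x : ℝ} {ν ℓ : ℕ}
    (hN : ∀ t ∈ Set.Icc (0 : ℝ) 1, |g t| ≤ N) (hx : x ∈ Set.Icc (0 : ℝ) 1)
    (P : ℕ → Prop) [DecidablePred P]
    (hP : ∀ j ≤ ν - ℓ, ¬ P j → ∀ i ≤ ℓ, g (↑(j + i) / ν) = 0) :
    |iteratedDeriv ℓ (bernApprox g ν) x| ≤
      (2 * ν) ^ ℓ * N * ∑ j ∈ (range (ν - ℓ + 1)).filter P, bern (ν - ℓ) j x := by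
  have hN0 : 0 ≤ N := (abs_nonneg _).trans (hN 0 ⟨le_rfl, zero_le_one⟩)
  have hsum : 0 ≤ ∑ j ∈ (range (ν - ℓ + 1)).filter P, bern (ν - ℓ) j x :=
    sum_nonneg fun j _ ↦ bern_nonneg hx
  rw [iteratedDeriv_bernApprox, abs_mul, Nat.abs_cast]
  rcases lt_or_ge ν ℓ with hνℓ | hℓν
  · rw [Nat.descFactorial_eq_zero_iff_lt.2 hνℓ, Nat.cast_zero, zero_mul]
    positivity
  have hbound : ∀ j ≤ ν - ℓ, |(Δ_[1])^[ℓ] (fun k : ℕ ↦ g (k / ν)) j| ≤ 2 ^ ℓ * N :=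
    fun j hj ↦ by
      simpa only [Real.norm_eq_abs] using norm_fwdDiff_iter_le (ℓ := ℓ) (j := j) fun i hi ↦
        (Real.norm_eq_abs _).trans_le <| hN _ ⟨by positivity,
          div_le_one_of_le₀ (by exact_mod_cast (by omega : j + i ≤ ν)) (Nat.cast_nonneg _)⟩
  have hzero : ∀ j ≤ ν - ℓ, ¬ P j → (Δ_[1])^[ℓ] (fun k : ℕ ↦ g (k / ν)) j = 0 := fun j hj hPj ↦
    norm_le_zero_iff.1 <| by
      simpa using norm_fwdDiff_iter_le (a := fun k : ℕ ↦ g (k / ν)) (ℓ := ℓ) (j := j) (N := 0)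
        fun i hi ↦ by rw [hP j hj hPj i hi, norm_zero]
  calc (ν.descFactorial ℓ : ℝ) *
        |∑ j ∈ range (ν - ℓ + 1), (Δ_[1])^[ℓ] (fun k : ℕ ↦ g (k / ν)) j * bern (ν - ℓ) j x|
      ≤ ν ^ ℓ * (2 ^ ℓ * N * ∑ j ∈ (range (ν - ℓ + 1)).filter P, bern (ν - ℓ) j x) :=
        mul_le_mul (by exact_mod_cast Nat.descFactorial_le_pow ν ℓ)
          (abs_sum_mul_bern_le hx P hbound hzero) (abs_nonneg _) (by positivity)
    _ = _ := by ring

theorem abs_iteratedDeriv_bernApprox_le_of_eq_zero {g : ℝ → ℝ} {N x η : ℝ} {ν ℓ : ℕ}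
    (hN : ∀ t ∈ Set.Icc (0 : ℝ) 1, |g t| ≤ N) (hx : x ∈ Set.Icc (0 : ℝ) 1)
    (hη0 : 0 < η) (hη1 : η ≤ 1) (hg : ∀ t, |t - x| ≤ 2 * η → g t = 0) (hν : 0 < ν) :
    |iteratedDeriv ℓ (bernApprox g ν) x| ≤
      2 * (2 * ν) ^ ℓ * N * exp (-(3 / 4 * η ^ 2 * (ν - ℓ / η - ℓ))) := by
  have hN0 : 0 ≤ N := (abs_nonneg _).trans (hN 0 ⟨le_rfl, zero_le_one⟩)
  by_cases hlarge : ℓ ≤ η * ν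
  · have hℓν : ℓ ≤ ν := by
      exact_mod_cast hlarge.trans (mul_le_of_le_one_left (Nat.cast_nonneg _) hη1)
    have hνpos : (0 : ℝ) < ν := Nat.cast_pos.2 hν
    set m := ν - ℓ
    have hmr : (m : ℝ) = ν - ℓ := Nat.cast_sub hℓν
    have hnear : ∀ j ≤ m, ¬ η * m ≤ |(j : ℝ) - m * x| → ∀ i ≤ ℓ, g (↑(j + i) / ν) = 0 := by
      intro j _ hj i hi
      have hi' : (i : ℝ) ≤ ℓ := by exact_mod_cast hi
      have hiℓ : |(i : ℝ) - ℓ * x| ≤ ℓ :=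
        abs_le.2 ⟨by nlinarith [hx.1, hx.2, (i.cast_nonneg : (0 : ℝ) ≤ i)], by nlinarith [hx.1]⟩
      have hdist : |(↑(j + i) : ℝ) - ν * x| ≤ 2 * η * ν :=
        calc |(↑(j + i) : ℝ) - ν * x| = |((j : ℝ) - m * x) + ((i : ℝ) - ℓ * x)| := by
              rw [hmr]; push_cast; ring_nf
          _ ≤ |(j : ℝ) - m * x| + |(i : ℝ) - ℓ * x| := abs_add_le _ _
          _ ≤ η * m + ℓ := by linarith [not_le.1 hj]
          _ ≤ 2 * η * ν := by rw [hmr]; nlinarith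
      apply hg
      rw [show (↑(j + i) : ℝ) / ν - x = (↑(j + i) - ν * x) / ν by field_simp, abs_div,
        abs_of_pos hνpos, div_le_iff₀ hνpos]
      exact hdist
    have hexp : exp (-(3 / 4 * η ^ 2 * m)) ≤ exp (-(3 / 4 * η ^ 2 * (ν - ℓ / η - ℓ))) := by
      rw [exp_le_exp, hmr]
      nlinarith [div_nonneg (Nat.cast_nonneg ℓ : (0 : ℝ) ≤ ℓ) hη0.le]
    calc |iteratedDeriv ℓ (bernApprox g ν) x|
        ≤ (2 * ν) ^ ℓ * N * ∑ j ∈ (range (m + 1)).filter fun j : ℕ ↦ η * m ≤ |(j : ℝ) - m * x|,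
            bern m j x := abs_iteratedDeriv_bernApprox_le hN hx _ hnear
      _ ≤ (2 * ν) ^ ℓ * N * (2 * exp (-(3 / 4 * η ^ 2 * m))) := by
          gcongr; exact sum_bern_far_le m hx hη0.le hη1
      _ = 2 * (2 * ν) ^ ℓ * N * exp (-(3 / 4 * η ^ 2 * m)) := by ring
      _ ≤ 2 * (2 * ν) ^ ℓ * N * exp (-(3 / 4 * η ^ 2 * (ν - ℓ / η - ℓ))) := by gcongr
  · have hsmall : (ν : ℝ) - ℓ / η - ℓ ≤ 0 := by
      have : (ν : ℝ) ≤ ℓ / η := (le_div_iff₀ hη0).2 (by linarith)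
      linarith [(Nat.cast_nonneg ℓ : (0 : ℝ) ≤ ℓ)]
    have hone : 1 ≤ exp (-(3 / 4 * η ^ 2 * (ν - ℓ / η - ℓ))) :=
      one_le_exp (neg_nonneg.2 (mul_nonpos_of_nonneg_of_nonpos (by positivity) hsmall))
    have hcrude := abs_iteratedDeriv_bernApprox_le (ν := ν) (ℓ := ℓ) hN hx (fun _ ↦ True)
      fun _ _ h ↦ absurd trivial h
    rw [filter_true, sum_bern, mul_one] at hcrude
    have : 0 ≤ (2 * ν : ℝ) ^ ℓ * N := by positivity
    nlinarith

theorem bernstein_comparison_general (f₁ f₂ : ℝ → ℝ)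
    (Ω : Set ℝ) (hΩopen : IsOpen Ω) (hΩsub : Ω ⊆ Set.Ioo (0 : ℝ) 1)
    (heq : Set.EqOn f₁ f₂ Ω) (ℓ : ℕ)
    (K : Set ℝ) (hK : IsCompact K) (hKΩ : K ⊆ Ω) :
    ∃ M > (0 : ℝ), ∀ ν : ℕ, 1 ≤ ν → ∀ x ∈ K, ∀ N : ℝ,
      (∀ t ∈ Set.Icc (0 : ℝ) 1, |f₁ t - f₂ t| ≤ N) →
      |iteratedDeriv ℓ (bernApprox f₁ ν) x - iteratedDeriv ℓ (bernApprox f₂ ν) x|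
        ≤ M / ν ^ 2 * N := by
  obtain ⟨δ, hδ, hKδ⟩ := hK.exists_cthickening_subset_open hΩopen hKΩ
  set η := min δ 1 / 2 with hη
  have hη0 : 0 < η := by positivity
  have hη1 : η ≤ 1 := by linarith [min_le_right δ 1]
  set c := 3 / 4 * η ^ 2
  have hc0 : 0 < c := by positivity
  refine ⟨2 ^ (ℓ + 1) * exp (c * (ℓ / η + ℓ)) * ((ℓ + 2)! / c ^ (ℓ + 2)), by positivity, ?_⟩
  intro ν hν x hx N hN
  have hνpos : (0 : ℝ) < ν := by exact_mod_cast hν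
  have hN0 : 0 ≤ N := (abs_nonneg _).trans (hN 0 ⟨le_rfl, zero_le_one⟩)
  have hvanish : ∀ t, |t - x| ≤ 2 * η → (f₁ - f₂) t = 0 := fun t ht ↦
    sub_eq_zero.2 <| heq <| hKδ <| Metric.mem_cthickening_of_dist_le t x δ K hx <| by
      rw [Real.dist_eq]; linarith [min_le_left δ 1]
  have hD := abs_iteratedDeriv_bernApprox_le_of_eq_zero (g := f₁ - f₂) (ℓ := ℓ) hN
    (Set.Ioo_subset_Icc_self (hΩsub (hKΩ hx))) hη0 hη1 hvanish hν
  have hexp : exp (-(c * (ν - ℓ / η - ℓ))) = exp (c * (ℓ / η + ℓ)) * exp (-(c * ν)) := by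
    rw [← exp_add]; ring_nf
  rw [iteratedDeriv_bernApprox_sub]
  calc _ ≤ 2 * (2 * ν) ^ ℓ * N * exp (-(c * (ν - ℓ / η - ℓ))) := hD
    _ = 2 ^ (ℓ + 1) * exp (c * (ℓ / η + ℓ)) * N * (ν ^ (ℓ + 2) * exp (-(c * ν))) / ν ^ 2 := by
        rw [hexp]; field_simp; ring
    _ ≤ 2 ^ (ℓ + 1) * exp (c * (ℓ / η + ℓ)) * N * ((ℓ + 2)! / c ^ (ℓ + 2)) / ν ^ 2 := by
        gcongr; exact pow_mul_exp_neg_le _ hc0 hνpos.le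
    _ = _ := by ring

theorem bernstein_comparison (f₁ f₂ : ℝ → ℝ)
    (hf₁ : ContinuousOn f₁ (Set.Icc (0 : ℝ) 1))
    (hf₂ : ContinuousOn f₂ (Set.Icc (0 : ℝ) 1))
    (Ω : Set ℝ) (hΩopen : IsOpen Ω) (hΩsub : Ω ⊆ Set.Ioo (0 : ℝ) 1)
    (heq : Set.EqOn f₁ f₂ Ω) (ℓ : ℕ)
    (K : Set ℝ) (hK : IsCompact K) (hKΩ : K ⊆ Ω) :
    ∃ M > (0 : ℝ), ∀ ν : ℕ, 1 ≤ ν → ∀ x ∈ K, ∀ N : ℝ,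
      (∀ t ∈ Set.Icc (0 : ℝ) 1, |f₁ t - f₂ t| ≤ N) →
      |iteratedDeriv ℓ (bernApprox f₁ ν) x - iteratedDeriv ℓ (bernApprox f₂ ν) x|
        ≤ M / ν ^ 2 * N :=
  bernstein_comparison_general f₁ f₂ Ω hΩopen hΩsub heq ℓ K hK hKΩ
end

section
/- Let C ⊂ ℝⁿ be a convex set with nonempty interior and let x, y ∈ C. If S denotes the segment joining x and y, then dist(S, ℝⁿ \ Int(C)) = min{dist(x, ℝⁿ \ Int(C)), dist(y, ℝⁿ \ Int(C))}. -/
/-!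
If the balls of radius `r` about `x` and `y` lie in a convex set `s`, so does the ball of radius
`r` about any `z = a • x + b • y` on the segment: `z + v = a • (x + v) + b • (y + v)`. Taking
`r = min (infDist x sᶜ) (infDist y sᶜ)` and `s = interior C` bounds the distance to the boundary
along the segment from below by its value at the nearer endpoint, and the endpoints attain it.
-/

open Metric

theorem le_infDist_compl_of_ball_subset {X : Type*} [PseudoMetricSpace X] {s : Set X} {z : X}
    {r : ℝ} (h : ball z r ⊆ s) (hsc : sᶜ.Nonempty) : r ≤ infDist z sᶜ :=
  (le_infDist hsc).2 fun _ hw => not_lt.1 fun hlt => hw (h (mem_ball'.2 hlt))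

section

variable {E : Type*} [SeminormedAddCommGroup E] [NormedSpace ℝ E] {s : Set E}

theorem Convex.setOf_ball_subset (hs : Convex ℝ s) (r : ℝ) : Convex ℝ {z | ball z r ⊆ s} := by
  intro x hx y hy a b ha hb hab w hw
  set v := w - (a • x + b • y)
  have hw_eq : w = a • (x + v) + b • (y + v) := by
    rw [smul_add, smul_add, add_add_add_comm, ← add_smul, hab, one_smul, add_sub_cancel]
  have hv : ‖v‖ < r := by rwa [← dist_eq_norm, ← mem_ball]
  rw [hw_eq]
  refine hs (hx ?_) (hy ?_) ha hb hab <;> simpa [mem_ball, dist_eq_norm] using hv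

theorem Convex.min_infDist_compl_le_of_mem_segment (hs : Convex ℝ s) {x y z : E}
    (hz : z ∈ segment ℝ x y) :
    min (infDist x sᶜ) (infDist y sᶜ) ≤ infDist z sᶜ := by
  rcases sᶜ.eq_empty_or_nonempty with hsc | hsc
  · simp [hsc]
  set r := min (infDist x sᶜ) (infDist y sᶜ)
  have hx : ball x r ⊆ s := (ball_subset_ball (min_le_left _ _)).trans ball_infDist_compl_subset
  have hy : ball y r ⊆ s := (ball_subset_ball (min_le_right _ _)).trans ball_infDist_compl_subset
  exact le_infDist_compl_of_ball_subset
    ((hs.setOf_ball_subset r).segment_subset hx hy hz) hsc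

end

theorem segment_dist_to_boundary_general (n : ℕ) (C : Set (EuclideanSpace ℝ (Fin n)))
    (hC : Convex ℝ C)
    (x y : EuclideanSpace ℝ (Fin n)) :
    sInf ((fun z => Metric.infDist z (interior C)ᶜ) '' segment ℝ x y) =
      min (Metric.infDist x (interior C)ᶜ) (Metric.infDist y (interior C)ᶜ) := by
  refine IsLeast.csInf_eq ⟨?_, ?_⟩
  · rcases min_choice (infDist x (interior C)ᶜ) (infDist y (interior C)ᶜ) with h | h <;> rw [h]
    · exact ⟨x, left_mem_segment ℝ x y, rfl⟩
    · exact ⟨y, right_mem_segment ℝ x y, rfl⟩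
  · rintro _ ⟨z, hz, rfl⟩
    exact hC.interior.min_infDist_compl_le_of_mem_segment hz

theorem segment_dist_to_boundary (n : ℕ) (C : Set (EuclideanSpace ℝ (Fin n)))
    (hC : Convex ℝ C) (hint : (interior C).Nonempty)
    (x y : EuclideanSpace ℝ (Fin n)) (hx : x ∈ C) (hy : y ∈ C) :
    sInf ((fun z => Metric.infDist z (interior C)ᶜ) '' segment ℝ x y) =
      min (Metric.infDist x (interior C)ᶜ) (Metric.infDist y (interior C)ᶜ) :=
  segment_dist_to_boundary_general n C hC x y
end

section
/- Let [a,b] ⊂ ℝ be a compact interval, Ω ⊂ [a,b] open in [a,b], let a < t₁ < ⋯ < t_r < b with each t_i ∈ Ω, and let f : [a,b] → ℝ be continuous on [a,b] and (ℓ+4)-times continuously differentiable on Ω for some ℓ ≥ 0. Fix ε > 0 and a compact set K ⊂ Ω. Then there exists a polynomial g ∈ ℝ[t] such that (i) sup_{t∈[a,b]} |f(t) − g(t)| < ε, (ii) sup_{t∈K} |f^{(k)}(t) − g^{(k)}(t)| < ε for k = 1, …, ℓ, and (iii) g^{(k)}(t_i) = f^{(k)}(t_i) for i = 1, …, r and k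 = 0, …, ℓ. -/
/-!
Near `K` and the nodes, glue `f` by a smooth cutoff to a Weierstrass approximant of `f`; the
cutoff vanishes near the complement of `Ω`, so the glued function `F` is `C^ℓ` on all of
`[a, b]`, uniformly close to `f`, and equal to `f` near `K` and the nodes. Approximating
`F'` in `C^(ℓ-1)` and integrating gives a polynomial close to `F` in `C^ℓ([a, b])`. Its jets at
the nodes are then corrected by a Hermite interpolant of the defect; Hermite interpolation is
linear on a finite-dimensional space of data, so the correction is small in `C^ℓ([a, b])`.
-/

open Polynomial Set Filter Topology Function
open scoped Manifold

namespace Polynomial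

theorem exists_derivative_eq_and_eval_eq {R : Type*} [Field R] [CharZero R] (q : R[X])
    (x c : R) : ∃ p : R[X], derivative p = q ∧ p.eval x = c := by
  have : ∃ p : R[X], derivative p = q := by
    induction q using Polynomial.induction_on' with
    | add q₁ q₂ h₁ h₂ =>
      obtain ⟨p₁, rfl⟩ := h₁
      obtain ⟨p₂, rfl⟩ := h₂
      exact ⟨p₁ + p₂, derivative_add⟩
    | monomial n a =>
      refine ⟨monomial (n + 1) (a / (n + 1)), ?_⟩
      rw [derivative_monomial, Nat.add_sub_cancel, Nat.cast_succ,
        div_mul_cancel₀ _ n.cast_add_one_ne_zero]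
  obtain ⟨p, hp⟩ := this
  exact ⟨p + C (c - p.eval x), by simp [hp], by simp⟩

theorem pow_dvd_of_iterate_derivative_eval_eq_zero {R : Type*} [CommRing R] [NoZeroDivisors R]
    [CharZero R] {p : R[X]} {c : R} {n : ℕ}
    (h : ∀ k ≤ n, (derivative^[k] p).eval c = 0) : (X - C c) ^ (n + 1) ∣ p := by
  rcases eq_or_ne p 0 with rfl | hp
  · exact dvd_zero _
  exact (le_rootMultiplicity_iff hp).1 (lt_rootMultiplicity_of_isRoot_iterate_derivative hp h)

noncomputable def hermiteJets {R ι : Type*} [CommSemiring R] (t : ι → R) (ℓ : ℕ) :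
    R[X] →ₗ[R] ι × Fin (ℓ + 1) → R :=
  LinearMap.pi fun j => (leval (t j.1)).comp (derivative ^ (j.2 : ℕ))

@[simp]
theorem hermiteJets_apply {R ι : Type*} [CommSemiring R] (t : ι → R) (ℓ : ℕ) (p : R[X])
    (j : ι × Fin (ℓ + 1)) : hermiteJets t ℓ p j = (derivative^[j.2] p).eval (t j.1) := by
  simp [hermiteJets, Module.End.pow_apply]

section Field

variable {R ι : Type*} [Field R] [CharZero R] [Fintype ι]

theorem eq_zero_of_hermiteJets_eq_zero {t : ι → R} (ht : Injective t) {ℓ : ℕ} {p : R[X]}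
    (hdeg : p.degree < ↑(Fintype.card ι * (ℓ + 1))) (hp : hermiteJets t ℓ p = 0) : p = 0 := by
  classical
  by_contra hp0
  have hdvd : ∏ i, (X - C (t i)) ^ (ℓ + 1) ∣ p :=
    Finset.prod_dvd_of_coprime (fun i _ j _ hij => (pairwise_coprime_X_sub_C ht hij).pow)
      fun i _ => pow_dvd_of_iterate_derivative_eval_eq_zero fun k hk => by
        simpa using congrFun hp (i, ⟨k, Nat.lt_succ_of_le hk⟩)
  have hprod : (∏ i, (X - C (t i)) ^ (ℓ + 1)).natDegree = Fintype.card ι * (ℓ + 1) := by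
    rw [natDegree_prod_of_monic _ _ fun i _ => (monic_X_sub_C (t i)).pow _]
    simp
  have := natDegree_le_of_dvd hdvd hp0
  rw [hprod] at this
  exact this.not_gt ((natDegree_lt_iff_degree_lt hp0).2 hdeg)

theorem hermiteJets_surjective {t : ι → R} (ht : Injective t) (ℓ : ℕ) :
    Surjective (hermiteJets t ℓ) := by
  set N := Fintype.card ι * (ℓ + 1)
  let Φ := (hermiteJets t ℓ).comp (degreeLT R N).subtype
  have hinj : Injective Φ := by
    rw [← LinearMap.ker_eq_bot, Submodule.eq_bot_iff]
    rintro ⟨p, hp⟩ h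
    exact Subtype.ext (eq_zero_of_hermiteJets_eq_zero ht (mem_degreeLT.1 hp) h)
  have : FiniteDimensional R (degreeLT R N) := (degreeLTEquiv R N).symm.finiteDimensional
  have hrank : Module.finrank R (degreeLT R N) = Module.finrank R (ι × Fin (ℓ + 1) → R) := by
    simp [(degreeLTEquiv R N).finrank_eq, N]
  intro v
  obtain ⟨p, hp⟩ := (LinearMap.injective_iff_surjective_of_finrank_eq_finrank hrank).1 hinj v
  exact ⟨p, hp⟩

end Field

theorem exists_hermite_interpolant_bounded {ι : Type*} [Fintype ι] {t : ι → ℝ} (ht : Injective t)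
    (ℓ : ℕ) {S : Set ℝ} (hS : IsCompact S) :
    ∃ C : ℝ, ∀ v : ι × Fin (ℓ + 1) → ℝ, ∃ h : ℝ[X], hermiteJets t ℓ h = v ∧
      ∀ k ≤ ℓ, ∀ x ∈ S, |(derivative^[k] h).eval x| ≤ C * ‖v‖ := by
  classical
  choose e he using hermiteJets_surjective ht ℓ
  let basis (j : ι × Fin (ℓ + 1)) : ℝ[X] := e (Pi.single j 1)
  obtain ⟨M, hM⟩ := hS.exists_bound_of_continuousOn
    (f := fun x (jk : (ι × Fin (ℓ + 1)) × Fin (ℓ + 1)) => (derivative^[jk.2] (basis jk.1)).eval x)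
    (by fun_prop)
  refine ⟨Fintype.card (ι × Fin (ℓ + 1)) * M, fun v => ⟨∑ j, v j • basis j, ?_, ?_⟩⟩
  · simp only [map_sum, map_smul, basis, he]
    ext j
    simp [Finset.sum_apply, Pi.single_apply]
  intro k hk x hx
  have hbasis (j) : |(derivative^[k] (basis j)).eval x| ≤ M :=
    (norm_le_pi_norm _ (j, ⟨k, Nat.lt_succ_of_le hk⟩)).trans (hM x hx)
  calc |(derivative^[k] (∑ j, v j • basis j)).eval x|
      = |∑ j, v j * (derivative^[k] (basis j)).eval x| := by
        simp [iterate_derivative_sum, iterate_derivative_smul, eval_finsetSum]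
    _ ≤ ∑ j, |v j| * |(derivative^[k] (basis j)).eval x| :=
        (Finset.abs_sum_le_sum_abs _ _).trans_eq (by simp only [abs_mul])
    _ ≤ ∑ _j : ι × Fin (ℓ + 1), ‖v‖ * M := by
        gcongr with j
        · exact norm_le_pi_norm v j
        · exact hbasis j
    _ = Fintype.card (ι × Fin (ℓ + 1)) * M * ‖v‖ := by
        simp [Finset.card_univ]; ring

end Polynomial

theorem exists_polynomial_near_iteratedDerivWithin_Icc {a b : ℝ} (hab : a < b) {n : ℕ}
    {F : ℝ → ℝ} (hF : ContDiffOn ℝ n F (Icc a b)) {δ : ℝ} (hδ : 0 < δ) :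
    ∃ p : ℝ[X], ∀ k ≤ n, ∀ x ∈ Icc a b,
      |iteratedDerivWithin k F (Icc a b) x - (derivative^[k] p).eval x| < δ := by
  induction n generalizing F δ with
  | zero =>
    obtain ⟨p, hp⟩ := exists_polynomial_near_of_continuousOn a b F
      (contDiffOn_zero.1 (by exact_mod_cast hF)) δ hδ
    refine ⟨p, fun k hk x hx => ?_⟩
    obtain rfl : k = 0 := Nat.le_zero.1 hk
    simpa [abs_sub_comm] using hp x hx
  | succ n ih =>
    set η := δ / (1 + (b - a))
    have hη : 0 < η := div_pos hδ (by linarith)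
    obtain ⟨q, hq⟩ := ih (hF.derivWithin (uniqueDiffOn_Icc hab) (by norm_cast)) hη
    obtain ⟨p, rfl, hpa⟩ := exists_derivative_eq_and_eval_eq q a (F a)
    refine ⟨p, fun k hk x hx => ?_⟩
    cases k with
    | zero =>
      -- mean value inequality for `F - p`, which vanishes at `a`
      have hderiv : ∀ y ∈ Icc a b, HasDerivWithinAt (fun z => F z - p.eval z)
          (derivWithin F (Icc a b) y - (derivative p).eval y) (Icc a b) y := fun y hy =>
        ((hF.differentiableOn (by simp) y hy).hasDerivWithinAt).sub
          (p.hasDerivAt y).hasDerivWithinAt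
      have hbound : ∀ y ∈ Ico a b, ‖derivWithin F (Icc a b) y - (derivative p).eval y‖ ≤ η :=
        fun y hy => by simpa using (hq 0 (Nat.zero_le n) y (Ico_subset_Icc_self hy)).le
      have hmvt := norm_image_sub_le_of_norm_deriv_le_segment' hderiv hbound x hx
      rw [hpa, sub_self, sub_zero, Real.norm_eq_abs] at hmvt
      calc |iteratedDerivWithin 0 F (Icc a b) x - (derivative^[0] p).eval x|
          = |F x - p.eval x| := by simp
        _ ≤ η * (x - a) := hmvt
        _ ≤ η * (b - a) := by gcongr; exact hx.2
        _ < η * (1 + (b - a)) := by gcongr; linarith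
        _ = δ := div_mul_cancel₀ δ (by linarith)
    | succ k =>
      rw [iteratedDerivWithin_succ', Function.iterate_succ_apply]
      exact (hq k (by omega) x hx).trans_le (div_le_self hδ.le (by linarith))

theorem exists_polynomial_near_iteratedDerivWithin_Icc_interpolating {ι : Type*} [Fintype ι]
    {a b : ℝ} (hab : a < b) {ℓ : ℕ} {F : ℝ → ℝ} (hF : ContDiffOn ℝ ℓ F (Icc a b))
    {t : ι → ℝ} (ht : Injective t) (htI : ∀ i, t i ∈ Icc a b) {ε : ℝ} (hε : 0 < ε) :
    ∃ g : ℝ[X], (∀ k ≤ ℓ, ∀ x ∈ Icc a b,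
        |iteratedDerivWithin k F (Icc a b) x - (derivative^[k] g).eval x| < ε) ∧
      ∀ i, ∀ k ≤ ℓ, (derivative^[k] g).eval (t i) = iteratedDerivWithin k F (Icc a b) (t i) := by
  obtain ⟨C, hC⟩ := exists_hermite_interpolant_bounded ht ℓ (isCompact_Icc (a := a) (b := b))
  set δ := ε / (1 + |C|)
  have hδ : 0 < δ := div_pos hε (by positivity)
  obtain ⟨p, hp⟩ := exists_polynomial_near_iteratedDerivWithin_Icc hab hF hδ
  set v : ι × Fin (ℓ + 1) → ℝ := fun j =>
    iteratedDerivWithin j.2 F (Icc a b) (t j.1) - (derivative^[j.2] p).eval (t j.1)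
  have hv : ‖v‖ < δ := (pi_norm_lt_iff hδ).2 fun j =>
    hp j.2 (Nat.le_of_lt_succ j.2.2) (t j.1) (htI j.1)
  obtain ⟨h, hjets, hh⟩ := hC v
  refine ⟨p + h, fun k hk x hx => ?_, fun i k hk => ?_⟩
  · calc |iteratedDerivWithin k F (Icc a b) x - (derivative^[k] (p + h)).eval x|
        = |(iteratedDerivWithin k F (Icc a b) x - (derivative^[k] p).eval x)
            - (derivative^[k] h).eval x| := by
          rw [iterate_map_add, eval_add, sub_sub]
      _ ≤ |iteratedDerivWithin k F (Icc a b) x - (derivative^[k] p).eval x|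
            + |(derivative^[k] h).eval x| := abs_sub _ _
      _ < δ + |C| * δ := add_lt_add_of_lt_of_le (hp k hk x hx) ((hh k hk x hx).trans
          (mul_le_mul (le_abs_self C) hv.le (norm_nonneg v) (abs_nonneg C)))
      _ = ε := by rw [← one_add_mul, mul_div_cancel₀ ε (by positivity)]
  · have := congrFun hjets (i, ⟨k, Nat.lt_succ_of_le hk⟩)
    simp only [hermiteJets_apply, v] at this
    rw [iterate_map_add, eval_add, this, add_sub_cancel]

theorem iteratedDerivWithin_inter {𝕜 F : Type*} [NontriviallyNormedField 𝕜]
    [NormedAddCommGroup F] [NormedSpace 𝕜 F] {n : ℕ} {f : 𝕜 → F} {s u : Set 𝕜} {x : 𝕜}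
    (hu : u ∈ 𝓝 x) : iteratedDerivWithin n f (s ∩ u) x = iteratedDerivWithin n f s x := by
  simp only [iteratedDerivWithin_eq_iteratedFDerivWithin, iteratedFDerivWithin_inter hu]

theorem ContDiffOn.add_smul_sub_of_eventually_eq_zero {E F : Type*} [NormedAddCommGroup E]
    [NormedSpace ℝ E] [NormedAddCommGroup F] [NormedSpace ℝ F] {s U : Set E} (hU : IsOpen U)
    {n : WithTop ℕ∞} {f q : E → F} {χ : E → ℝ} (hf : ContDiffOn ℝ n f (U ∩ s))
    (hq : ContDiffOn ℝ n q s) (hχ : ContDiff ℝ n χ) (hχU : ∀ᶠ x in 𝓝ˢ Uᶜ, χ x = 0) :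
    ContDiffOn ℝ n (fun x => q x + χ x • (f x - q x)) s := by
  intro x hx
  by_cases hxU : x ∈ U
  · have hqx := hq.mono inter_subset_right x ⟨hxU, hx⟩
    refine (hqx.add (hχ.contDiffWithinAt.smul ((hf x ⟨hxU, hx⟩).sub hqx))).mono_of_mem_nhdsWithin
      ?_
    simpa only [inter_comm] using inter_mem_nhdsWithin s (hU.mem_nhds hxU)
  · have hχx : ∀ᶠ y in 𝓝 x, χ y = 0 := hχU.filter_mono (nhds_le_nhdsSet hxU)
    refine (hq x hx).congr_of_eventuallyEq ?_ (by simp [hχx.self_of_nhds])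
    filter_upwards [nhdsWithin_le_nhds hχx] with y hy
    simp [hy]

theorem exists_contDiffOn_Icc_near_eventuallyEq_nhdsSet {a b : ℝ} {U : Set ℝ} (hU : IsOpen U)
    {n : ℕ} {f : ℝ → ℝ} (hfc : ContinuousOn f (Icc a b)) (hfd : ContDiffOn ℝ n f (U ∩ Icc a b))
    {K : Set ℝ} (hK : IsClosed K) (hKU : K ⊆ U) {δ : ℝ} (hδ : 0 < δ) :
    ∃ F : ℝ → ℝ, ContDiffOn ℝ n F (Icc a b) ∧ (∀ x ∈ Icc a b, |f x - F x| < δ) ∧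
      F =ᶠ[𝓝ˢ K] f := by
  obtain ⟨q, hq⟩ := exists_polynomial_near_of_continuousOn a b f hfc δ hδ
  obtain ⟨χ, hχU, hχK, hχ01⟩ := exists_contMDiffMap_zero_one_nhds_of_isClosed 𝓘(ℝ, ℝ) (n := n)
    hU.isClosed_compl hK (disjoint_compl_left_iff_subset.2 hKU)
  have hqC : ContDiff ℝ n fun x => q.eval x := by simpa using q.contDiff_aeval (𝕜 := ℝ) n
  refine ⟨fun x => q.eval x + χ x • (f x - q.eval x), ?_, fun x hx => ?_, ?_⟩
  · exact hfd.add_smul_sub_of_eventually_eq_zero hU hqC.contDiffOn χ.contMDiff.contDiff hχU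
  · have h1χ : |1 - χ x| ≤ 1 := abs_le.2 ⟨by linarith [(hχ01 x).2], by linarith [(hχ01 x).1]⟩
    calc |f x - (q.eval x + χ x • (f x - q.eval x))| = |1 - χ x| * |q.eval x - f x| := by
          rw [← abs_mul, ← abs_neg, smul_eq_mul]; ring_nf
      _ ≤ 1 * |q.eval x - f x| := by gcongr
      _ < δ := by rw [one_mul]; exact hq x hx
  · filter_upwards [hχK] with x hx
    simp [hx]

theorem approximation_with_interpolation_general (a b : ℝ) (hab : a < b)
    (Ω : Set ℝ) (hΩ : ∃ U : Set ℝ, IsOpen U ∧ Ω = U ∩ Set.Icc a b)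
    (r : ℕ) (t : Fin r → ℝ) (hmono : StrictMono t)
    (htΩ : ∀ i, t i ∈ Ω)
    (ℓ : ℕ) (f : ℝ → ℝ) (hfc : ContinuousOn f (Set.Icc a b))
    (hfd : ContDiffOn ℝ (ℓ + 4) f Ω)
    (ε : ℝ) (hε : 0 < ε) (K : Set ℝ) (hK : IsCompact K) (hKΩ : K ⊆ Ω) :
    ∃ g : Polynomial ℝ,
      (∀ x ∈ Set.Icc a b, |f x - g.eval x| < ε) ∧
      (∀ k : ℕ, 1 ≤ k → k ≤ ℓ → ∀ x ∈ K,
        |iteratedDerivWithin k f Ω x - (Polynomial.derivative^[k] g).eval x| < ε) ∧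
      (∀ i : Fin r, ∀ k : ℕ, k ≤ ℓ →
        (Polynomial.derivative^[k] g).eval (t i) = iteratedDerivWithin k f Ω (t i)) := by
  obtain ⟨U, hU, rfl⟩ := hΩ
  set K' := K ∪ range t
  have hK'U : K' ⊆ U :=
    union_subset (hKΩ.trans inter_subset_left) (range_subset_iff.2 fun i => (htΩ i).1)
  obtain ⟨F, hF, hfF, hFf⟩ := exists_contDiffOn_Icc_near_eventuallyEq_nhdsSet (n := ℓ) hU hfc
    (hfd.of_le le_self_add) (hK.union (finite_range t).isCompact).isClosed hK'U
    (half_pos hε)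
  have hderiv : ∀ x ∈ K', ∀ k : ℕ,
      iteratedDerivWithin k f (U ∩ Icc a b) x = iteratedDerivWithin k F (Icc a b) x := by
    intro x hx k
    have hFx : F =ᶠ[𝓝 x] f := hFf.filter_mono (nhds_le_nhdsSet hx)
    rw [← (hFx.filter_mono nhdsWithin_le_nhds).iteratedDerivWithin_eq hFx.self_of_nhds,
      inter_comm, iteratedDerivWithin_inter (hU.mem_nhds (hK'U hx))]
  obtain ⟨g, hg, hgt⟩ := exists_polynomial_near_iteratedDerivWithin_Icc_interpolating hab hF
    hmono.injective (fun i => (htΩ i).2) (half_pos hε)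
  refine ⟨g, fun x hx => ?_, fun k _ hk x hx => ?_, fun i k hk => ?_⟩
  · calc |f x - g.eval x| ≤ |f x - F x| + |F x - g.eval x| := abs_sub_le _ _ _
      _ < ε / 2 + ε / 2 := add_lt_add (hfF x hx) (by simpa using hg 0 (Nat.zero_le ℓ) x hx)
      _ = ε := add_halves ε
  · rw [hderiv x (Or.inl hx)]
    exact (hg k hk x (hKΩ hx).2).trans (half_lt_self hε)
  · rw [hderiv _ (Or.inr ⟨i, rfl⟩)]
    exact hgt i k hk

theorem approximation_with_interpolation (a b : ℝ) (hab : a < b)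
    (Ω : Set ℝ) (hΩ : ∃ U : Set ℝ, IsOpen U ∧ Ω = U ∩ Set.Icc a b)
    (r : ℕ) (hr : 1 ≤ r) (t : Fin r → ℝ) (hmono : StrictMono t)
    (htab : ∀ i, t i ∈ Set.Ioo a b) (htΩ : ∀ i, t i ∈ Ω)
    (ℓ : ℕ) (f : ℝ → ℝ) (hfc : ContinuousOn f (Set.Icc a b))
    (hfd : ContDiffOn ℝ (ℓ + 4) f Ω)
    (ε : ℝ) (hε : 0 < ε) (K : Set ℝ) (hK : IsCompact K) (hKΩ : K ⊆ Ω) :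
    ∃ g : Polynomial ℝ,
      (∀ x ∈ Set.Icc a b, |f x - g.eval x| < ε) ∧
      (∀ k : ℕ, 1 ≤ k → k ≤ ℓ → ∀ x ∈ K,
        |iteratedDerivWithin k f Ω x - (Polynomial.derivative^[k] g).eval x| < ε) ∧
      (∀ i : Fin r, ∀ k : ℕ, k ≤ ℓ →
        (Polynomial.derivative^[k] g).eval (t i) = iteratedDerivWithin k f Ω (t i)) :=
  approximation_with_interpolation_general a b hab Ω hΩ r t hmono htΩ ℓ f hfc hfd ε hε K hK hKΩ
end
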